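/- Suppose the offspring distribution Z satisfies P(Z = 0) = 0, 0 < P(Z = 1) < 1, and E[Z^{1+δ}] < ∞ for some δ > 0. For a vertex v of a tree T define m_T(v) := #{ v' < v : deg(v') ≥ 2 }, the number of strict ancestors of v having at least two children. Then there exists c > 0 such that for GW-almost every tree T there is an N (depending on T) such that for every n ≥ N: min over vertices v at height n of m_T(v) is at least c·n. -/

import Mathlib

open MeasureTheory ProbabilityTheory Filter Real
open scoped ENNReal NNReal

noncomputable section

instance : MeasurableSpace (List ℕ) := ⊤

/-- Ulam–Harris rooted trees; a vertex is encoded as the reversed list of the child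
indices along the path from the root (so the parent of `i :: v` is `v`, and the
root is `[]`).  The children of a vertex are labelled `0, 1, …`, and the set of
children of every vertex is finite. -/
structure GWTree where
  mem : List ℕ → Prop
  root_mem : mem []
  parent_mem : ∀ i v, mem (i :: v) → mem v
  sibling_mem : ∀ i j v, mem (i :: v) → j ≤ i → mem (j :: v)
  fin_children : ∀ v, {i | mem (i :: v)}.Finite

namespace GWTree

/-- The number of children of `v` in `T`. -/
def deg (T : GWTree) (v : List ℕ) : ℕ := (T.fin_children v).toFinset.card

/-- Transition probabilities of the simple random walk on `T`: from a vertex `u` the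
walk moves to a uniformly chosen neighbour of `u` (its parent `u.tail`, if `u` is not
the root, or one of its children `i :: u`). -/
def step (T : GWTree) (u v : List ℕ) : ℝ≥0∞ := by
  classical
  exact if (u ≠ [] ∧ v = u.tail) ∨ (∃ i, v = i :: u ∧ T.mem v) then
    ((T.deg u + (if u = [] then 0 else 1) : ℕ) : ℝ≥0∞)⁻¹
  else 0

end GWTree

instance : MeasurableSpace GWTree :=
  MeasurableSpace.comap (fun T : GWTree => T.mem) inferInstance

/-- The tree generated by an assignment `f` of numbers of children to the potential
vertices: `i :: v` is a vertex iff `v` is a vertex and `i < f v`. -/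
def genMem (f : List ℕ → ℕ) : List ℕ → Prop
  | [] => True
  | i :: v => genMem f v ∧ i < f v

/-- The Galton–Watson tree built from the offspring data `f`. -/
def genTree (f : List ℕ → ℕ) : GWTree where
  mem := genMem f
  root_mem := trivial
  parent_mem := fun _ _ h => h.1
  sibling_mem := fun _ _ _ h hj => ⟨h.1, lt_of_le_of_lt hj h.2⟩
  fin_children := fun v => (Set.finite_Iio (f v)).subset fun _ hi => hi.2

/-- `GW` is the Galton–Watson measure with offspring distribution `ν`: the image of an
i.i.d. family (indexed by the potential vertices) of `ν`-distributed offspring numbers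
under the map generating the corresponding tree. -/
def IsGW (ν : Measure ℕ) (GW : Measure GWTree) : Prop :=
  ∃ (Ω : Type) (_ : MeasurableSpace Ω) (P : Measure Ω),
    IsProbabilityMeasure P ∧
    ∃ ξ : List ℕ → Ω → ℕ,
      iIndepFun ξ P ∧ (∀ v, Measurable (ξ v)) ∧
      (∀ v, P.map (ξ v) = ν) ∧
      GW = P.map fun ω => genTree fun v => ξ v ω

/-- `P` is the law of the simple random walk on `T` started at `v₀`, characterised
through its finite-dimensional distributions. -/
def IsSRWFrom (T : GWTree) (v₀ : List ℕ) (P : Measure (ℕ → List ℕ)) : Prop :=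
  IsProbabilityMeasure P ∧
  ∀ (x : ℕ → List ℕ) (n : ℕ),
    P {ω | ∀ j ≤ n, ω j = x j} =
      (if x 0 = v₀ then 1 else 0) * ∏ j ∈ Finset.range n, T.step (x j) (x (j + 1))

/-- `P` is the law of the simple random walk on `T` started at the root. -/
def IsSRW (T : GWTree) (P : Measure (ℕ → List ℕ)) : Prop := IsSRWFrom T ([] : List ℕ) P

/-- The maximal displacement (distance from the root) of the path `ω` up to time `n`. -/
def maxDisp (n : ℕ) (ω : ℕ → List ℕ) : ℕ :=
  (Finset.range (n + 1)).sup fun j => (ω j).length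

/-- The event that the tree `T` survives (is infinite). -/
def survives (T : GWTree) : Prop := {v | T.mem v}.Infinite

/-- `m_T(v)`: the number of strict ancestors of `v` having at least two children. -/
def mTcount (T : GWTree) (v : List ℕ) : ℕ :=
  Set.ncard {j : ℕ | j < v.length ∧ 2 ≤ T.deg (v.drop (j + 1))}

/-!
Give each vertex with at least two children the weight `y = s ^ K` and every other vertex
the weight `1`, and weigh a path by the product along it, so that `v` gets `y ^ m_T(v)`. By the
many-to-one formula the expected total weight of generation `n` is `φ ^ n`, where
`φ = E[Z y^{1[Z ≥ 2]}] ≤ P(Z = 1) + y E[Z]`; taking `P(Z = 1) < s < 1` and `K` large gives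
`φ < s`. A vertex at height `n` with `K m_T(v) < n` has weight at least `s ^ n`, so by Markov's
inequality such a vertex exists with probability at most `(φ / s) ^ n`. This is summable, and
Borel–Cantelli gives the theorem with `c = 1 / K`.
-/

open Topology

namespace GWTree

theorem two_le_deg_iff (T : GWTree) (w : List ℕ) : 2 ≤ T.deg w ↔ T.mem (1 :: w) := by
  have hmem : ∀ i, i ∈ (T.fin_children w).toFinset ↔ T.mem (i :: w) := fun i => by simp
  constructor
  · intro h
    obtain ⟨a, ha, b, hb, hab⟩ := Finset.one_lt_card.1 h
    rcases Nat.lt_or_ge a 1 with ha1 | ha1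
    · exact T.sibling_mem b 1 w ((hmem b).1 hb) (by omega)
    · exact T.sibling_mem a 1 w ((hmem a).1 ha) ha1
  · intro h
    have h01 : ({0, 1} : Finset ℕ) ⊆ (T.fin_children w).toFinset := by
      intro i hi
      rcases Finset.mem_insert.1 hi with rfl | hi
      · exact (hmem 0).2 (T.sibling_mem 1 0 w h zero_le_one)
      · exact (hmem _).2 (Finset.mem_singleton.1 hi ▸ h)
    exact Finset.card_le_card h01

theorem mTcount_nil (T : GWTree) : mTcount T [] = 0 := by
  simp [mTcount]

theorem mTcount_cons (T : GWTree) (i : ℕ) (v : List ℕ) :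
    mTcount T (i :: v) = mTcount T v + if 2 ≤ T.deg v then 1 else 0 := by
  have hcard : ∀ u : List ℕ, mTcount T u =
      ((Finset.range u.length).filter fun j => 2 ≤ T.deg (u.drop (j + 1))).card := by
    intro u
    rw [mTcount, ← Set.ncard_coe_finset]
    congr 1
    ext j
    simp
  simp only [hcard, Finset.card_filter, List.length_cons, Finset.sum_range_succ',
    List.drop_succ_cons, List.drop_zero]

theorem measurableSet_mem (w : List ℕ) : MeasurableSet {T : GWTree | T.mem w} :=
  ⟨(fun g => g w) ⁻¹' {p : Prop | p}, measurable_pi_apply w .of_discrete, rfl⟩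

theorem measurable_mTcount (v : List ℕ) : Measurable fun T : GWTree => mTcount T v := by
  induction v with
  | nil => simpa only [mTcount_nil] using measurable_const
  | cons i v ih =>
    have hbranch : MeasurableSet {T : GWTree | 2 ≤ T.deg v} := by
      simpa only [two_le_deg_iff] using measurableSet_mem (1 :: v)
    simp only [mTcount_cons]
    exact ih.add (Measurable.ite hbranch measurable_const measurable_const)

end GWTree

theorem deg_genTree (f : List ℕ → ℕ) {v : List ℕ} (hv : genMem f v) :
    (genTree f).deg v = f v := by
  have : ((genTree f).fin_children v).toFinset = Finset.range (f v) := by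
    ext i
    rw [Set.Finite.mem_toFinset, Finset.mem_range]
    exact ⟨And.right, And.intro hv⟩
  simp [GWTree.deg, this]

/-- `pathWeight g f v = ∏ g (f u)` over the strict ancestors `u` of `v` if `v` is a vertex of
`genTree f`, and `0` otherwise. -/
def pathWeight (g : ℕ → ℝ≥0∞) (f : List ℕ → ℕ) : List ℕ → ℝ≥0∞
  | [] => 1
  | i :: v => pathWeight g f v * if i < f v then g (f v) else 0

theorem tsum_pathWeight_cons (g : ℕ → ℝ≥0∞) (f : List ℕ → ℕ) (v : List ℕ) :
    ∑' i, pathWeight g f (i :: v) = pathWeight g f v * (f v * g (f v)) := by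
  simp only [pathWeight]
  rw [ENNReal.tsum_mul_left, tsum_eq_sum (s := Finset.range (f v)) fun i hi => by
    simp [Finset.mem_range.not.1 hi]]
  rw [Finset.sum_congr rfl fun i hi => if_pos (Finset.mem_range.1 hi)]
  simp

def branchWeight (y : ℝ≥0∞) (k : ℕ) : ℝ≥0∞ := if 2 ≤ k then y else 1

theorem pathWeight_branchWeight (y : ℝ≥0∞) (f : List ℕ → ℕ) {v : List ℕ} (hv : genMem f v) :
    pathWeight (branchWeight y) f v = y ^ mTcount (genTree f) v := by
  induction v with
  | nil => simp [pathWeight, GWTree.mTcount_nil]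
  | cons i v ih =>
    rw [pathWeight, ih hv.1, if_pos hv.2, GWTree.mTcount_cons, deg_genTree f hv.1, branchWeight]
    split_ifs <;> simp [pow_succ]

theorem pow_length_le_pathWeight {s : ℝ≥0∞} (hs : s ≤ 1) {K : ℕ} (f : List ℕ → ℕ) {v : List ℕ}
    (hv : genMem f v) (hlow : K * mTcount (genTree f) v ≤ v.length) :
    s ^ v.length ≤ pathWeight (branchWeight (s ^ K)) f v := by
  rw [pathWeight_branchWeight _ f hv, ← pow_mul]
  exact pow_le_pow_right_of_le_one' hs hlow

def consLengthEquiv (α : Type*) [Inhabited α] (n : ℕ) :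
    α × {l : List α // l.length = n} ≃ {l : List α // l.length = n + 1} where
  toFun p := ⟨p.1 :: p.2.1, by simp [p.2.2]⟩
  invFun l := (l.1.headI, ⟨l.1.tail, by simp [l.2]⟩)
  left_inv _ := rfl
  right_inv := by
    rintro ⟨_ | ⟨a, l⟩, hl⟩
    · simp at hl
    · rfl

theorem tsum_length_succ {α : Type*} [Inhabited α] (F : List α → ℝ≥0∞) (n : ℕ) :
    ∑' v : {l : List α // l.length = n + 1}, F v =
      ∑' v : {l : List α // l.length = n}, ∑' a, F (a :: v) := by
  rw [← (consLengthEquiv α n).tsum_eq, ← ENNReal.tsum_comm]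
  exact ENNReal.tsum_prod (f := fun a (v : {l : List α // l.length = n}) => F (a :: v))

section ManyToOne

variable {Ω : Type*} {ξ : List ℕ → Ω → ℕ}

abbrev generationsBelow (ξ : List ℕ → Ω → ℕ) (n : ℕ) : MeasurableSpace Ω :=
  ⨆ u ∈ {u : List ℕ | u.length < n}, MeasurableSpace.comap (ξ u) inferInstance

theorem comap_le_generationsBelow {u : List ℕ} {n : ℕ} (hu : u.length < n) :
    MeasurableSpace.comap (ξ u) inferInstance ≤ generationsBelow ξ n :=
  le_iSup₂ (f := fun u (_ : u ∈ {u : List ℕ | u.length < n}) =>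
    MeasurableSpace.comap (ξ u) inferInstance) u hu

theorem measurable_pathWeight_generationsBelow (g : ℕ → ℝ≥0∞) {v : List ℕ} {n : ℕ}
    (hv : v.length ≤ n) :
    Measurable[generationsBelow ξ n] fun ω => pathWeight g (ξ · ω) v := by
  induction v with
  | nil => exact measurable_const
  | cons i v ih =>
    have hvn : v.length < n := by simpa using hv
    exact (ih hvn.le).mul ((Measurable.of_discrete (f := fun k => if i < k then g k else 0)).comp
      ((comap_measurable (ξ v)).mono (comap_le_generationsBelow hvn) le_rfl))

variable [mΩ : MeasurableSpace Ω] {P : Measure Ω}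

theorem generationsBelow_le (hξ : ∀ u, Measurable (ξ u)) (n : ℕ) :
    generationsBelow ξ n ≤ mΩ :=
  iSup₂_le fun u _ => (hξ u).comap_le

theorem measurable_pathWeight (hξ : ∀ u, Measurable (ξ u)) (g : ℕ → ℝ≥0∞) (v : List ℕ) :
    Measurable fun ω => pathWeight g (ξ · ω) v :=
  (measurable_pathWeight_generationsBelow g le_rfl).mono (generationsBelow_le hξ _) le_rfl

theorem lintegral_pathWeight_mul (hind : iIndepFun ξ P) (hξ : ∀ u, Measurable (ξ u))
    (g h : ℕ → ℝ≥0∞) (v : List ℕ) :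
    ∫⁻ ω, pathWeight g (ξ · ω) v * h (ξ v ω) ∂P =
      (∫⁻ ω, pathWeight g (ξ · ω) v ∂P) * ∫⁻ ω, h (ξ v ω) ∂P := by
  have hindep :
      Indep (generationsBelow ξ v.length) (MeasurableSpace.comap (ξ v) inferInstance) P := by
    have := indep_iSup_of_disjoint (fun u => (hξ u).comap_le) hind.iIndep
      (S := {u : List ℕ | u.length < v.length}) (T := {v}) (by simp)
    rwa [iSup_singleton] at this
  exact lintegral_mul_eq_lintegral_mul_lintegral_of_independent_measurableSpace
    (generationsBelow_le hξ _) (hξ v).comap_le hindep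
    (measurable_pathWeight_generationsBelow g le_rfl)
    (Measurable.of_discrete.comp (comap_measurable (ξ v)))

theorem tsum_lintegral_pathWeight [IsProbabilityMeasure P] (hind : iIndepFun ξ P)
    (hξ : ∀ u, Measurable (ξ u)) (g : ℕ → ℝ≥0∞) {φ : ℝ≥0∞}
    (hφ : ∀ u, ∫⁻ ω, ξ u ω * g (ξ u ω) ∂P = φ) (n : ℕ) :
    ∑' v : {l : List ℕ // l.length = n}, ∫⁻ ω, pathWeight g (ξ · ω) v ∂P = φ ^ n := by
  induction n with
  | zero =>
    rw [tsum_eq_single (⟨[], rfl⟩ : {l : List ℕ // l.length = 0}) fun v hv =>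
      absurd (Subtype.ext (List.length_eq_zero_iff.1 v.2)) hv]
    simp [pathWeight]
  | succ n ih =>
    rw [tsum_length_succ (fun v => ∫⁻ ω, pathWeight g (ξ · ω) v ∂P), pow_succ, ← ih,
      ← ENNReal.tsum_mul_right]
    refine tsum_congr fun v => ?_
    rw [← lintegral_tsum fun i => (measurable_pathWeight hξ g _).aemeasurable]
    simp_rw [tsum_pathWeight_cons]
    rw [lintegral_pathWeight_mul hind hξ g (fun k => k * g k), hφ]

end ManyToOne

theorem measurableSet_genMem {Ω : Type*} [MeasurableSpace Ω] {ξ : List ℕ → Ω → ℕ}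
    (hξ : ∀ u, Measurable (ξ u)) (w : List ℕ) : MeasurableSet {ω | genMem (ξ · ω) w} := by
  induction w with
  | nil => exact MeasurableSet.univ
  | cons i w ih => exact ih.inter (hξ w .of_discrete)

theorem measurable_genTree {Ω : Type*} [MeasurableSpace Ω] {ξ : List ℕ → Ω → ℕ}
    (hξ : ∀ u, Measurable (ξ u)) : Measurable fun ω => genTree (ξ · ω) :=
  measurable_comap_iff.2 <|
    measurable_pi_lambda _ fun w => measurableSet_setOfPred.1 (measurableSet_genMem hξ w)

def lowBranchingAt (K n : ℕ) : Set GWTree :=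
  {T | ∃ v, T.mem v ∧ v.length = n ∧ K * mTcount T v < n}

theorem measurableSet_lowBranchingAt (K n : ℕ) : MeasurableSet (lowBranchingAt K n) := by
  rw [lowBranchingAt, Set.ofPred_exists]
  exact .iUnion fun v => (GWTree.measurableSet_mem v).inter <|
    (MeasurableSet.const _).inter
      (GWTree.measurable_mTcount v (.of_discrete (s := {m | K * m < n})))

theorem measure_lowBranchingAt_le {ν : Measure ℕ} {GW : Measure GWTree} (hGW : IsGW ν GW)
    {s : ℝ≥0∞} (hs0 : s ≠ 0) (hs1 : s ≤ 1) (K n : ℕ) :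
    GW (lowBranchingAt K n) ≤ ((∫⁻ k, k * branchWeight (s ^ K) k ∂ν) / s) ^ n := by
  obtain ⟨Ω, _, P, _, ξ, hind, hξ, hmap, rfl⟩ := hGW
  set g := branchWeight (s ^ K)
  have hφ : ∀ u, ∫⁻ ω, ξ u ω * g (ξ u ω) ∂P = ∫⁻ k, k * g k ∂ν := fun u => by
    rw [← hmap u, lintegral_map .of_discrete (hξ u)]
  set F : Ω → ℝ≥0∞ := fun ω => (s⁻¹) ^ n * ∑' v : {l : List ℕ // l.length = n},
    pathWeight g (ξ · ω) v
  have hF : Measurable F :=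
    measurable_const.mul (Measurable.tsum fun v => measurable_pathWeight hξ g v)
  have hsub : (fun ω => genTree (ξ · ω)) ⁻¹' lowBranchingAt K n ⊆ {ω | 1 ≤ F ω} := by
    rintro ω ⟨v, hv, rfl, hlow⟩
    calc (1 : ℝ≥0∞) = (s⁻¹) ^ v.length * s ^ v.length := by
          rw [← mul_pow, ENNReal.inv_mul_cancel hs0 (ne_top_of_le_ne_top ENNReal.one_ne_top hs1),
            one_pow]
      _ ≤ (s⁻¹) ^ v.length * pathWeight g (ξ · ω) v :=
          mul_le_mul_right (pow_length_le_pathWeight hs1 _ hv hlow.le) _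
      _ ≤ F ω :=
          mul_le_mul_right (ENNReal.le_tsum (⟨v, rfl⟩ : {l : List ℕ // l.length = v.length})) _
  calc _ = P ((fun ω => genTree (ξ · ω)) ⁻¹' lowBranchingAt K n) :=
        Measure.map_apply (measurable_genTree hξ) (measurableSet_lowBranchingAt K n)
    _ ≤ P {ω | 1 ≤ F ω} := measure_mono hsub
    _ ≤ ∫⁻ ω, F ω ∂P := by simpa using mul_meas_ge_le_lintegral₀ hF.aemeasurable 1
    _ = (s⁻¹) ^ n * ∑' v : {l : List ℕ // l.length = n}, ∫⁻ ω, pathWeight g (ξ · ω) v ∂P := by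
        rw [lintegral_const_mul' _ _ (ENNReal.pow_ne_top (ENNReal.inv_ne_top.2 hs0)),
          lintegral_tsum (f := fun (v : {l : List ℕ // l.length = n}) ω => pathWeight g (ξ · ω) v)
            fun v => (measurable_pathWeight hξ g v).aemeasurable]
    _ = _ := by
        rw [tsum_lintegral_pathWeight hind hξ g hφ, div_eq_mul_inv, mul_pow, mul_comm]

theorem lintegral_mul_branchWeight_le (ν : Measure ℕ) (y : ℝ≥0∞) :
    ∫⁻ k, k * branchWeight y k ∂ν ≤ ν {1} + y * ∫⁻ k, (k : ℝ≥0∞) ∂ν := by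
  calc _ ≤ ∫⁻ k, (({1} : Set ℕ).indicator 1 k + y * k) ∂ν := lintegral_mono fun k => by
        rcases k with _ | _ | k <;> simp [branchWeight, mul_comm]
    _ = _ := by
        rw [lintegral_add_left .of_discrete, lintegral_indicator_one (.of_discrete),
          lintegral_const_mul _ .of_discrete]

theorem exists_branchWeight_lt (ν : Measure ℕ) (hmean : ∫⁻ k, (k : ℝ≥0∞) ∂ν ≠ ⊤)
    (h1 : ν {1} < 1) :
    ∃ s : ℝ≥0∞, s ≠ 0 ∧ s ≤ 1 ∧ ∃ K : ℕ, 0 < K ∧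
      ∫⁻ k, k * branchWeight (s ^ K) k ∂ν < s := by
  obtain ⟨s, hs, hs1⟩ := exists_between h1
  have htend : Tendsto (fun K : ℕ => s ^ K * ∫⁻ k, (k : ℝ≥0∞) ∂ν) atTop (𝓝 0) := by
    simpa using ENNReal.Tendsto.mul_const (ENNReal.tendsto_pow_atTop_nhds_zero_iff.2 hs1)
      (Or.inr hmean)
  obtain ⟨K, hK, hK1⟩ :=
    ((htend.eventually (gt_mem_nhds (tsub_pos_of_lt hs))).and (eventually_gt_atTop 0)).exists
  refine ⟨s, (pos_of_gt hs).ne', hs1.le, K, hK1, ?_⟩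
  calc _ ≤ ν {1} + s ^ K * ∫⁻ k, (k : ℝ≥0∞) ∂ν := lintegral_mul_branchWeight_le ν _
    _ < s := lt_tsub_iff_left.1 hK

theorem lintegral_natCast_ne_top_of_rpow {ν : Measure ℕ} {δ : ℝ} (hδ : 0 ≤ δ)
    (h : ∫⁻ k, (k : ℝ≥0∞) ^ ((1 : ℝ) + δ) ∂ν < ⊤) : ∫⁻ k, (k : ℝ≥0∞) ∂ν ≠ ⊤ := by
  refine ne_top_of_le_ne_top h.ne (lintegral_mono fun k => ?_)
  rcases Nat.eq_zero_or_pos k with rfl | hk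
  · simp
  · simpa using ENNReal.rpow_le_rpow_of_exponent_le (Nat.one_le_cast.2 hk)
      (by linarith : (1 : ℝ) ≤ 1 + δ)

theorem branching_ancestors_linear_lower_bound_general
    (ν : Measure ℕ)
    (hz1' : ν {1} < 1)
    (hmom : ∃ δ : ℝ, 0 < δ ∧ ∫⁻ k, (k : ℝ≥0∞) ^ ((1 : ℝ) + δ) ∂ν < ⊤)
    (GW : Measure GWTree) (hGW : IsGW ν GW) :
    ∃ c : ℝ, 0 < c ∧
      ∀ᵐ T ∂GW, ∃ N : ℕ, ∀ n, N ≤ n → ∀ v : List ℕ, T.mem v → v.length = n →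
        c * n ≤ (mTcount T v : ℝ) := by
  obtain ⟨δ, hδ, hmomδ⟩ := hmom
  obtain ⟨s, hs0, hs1, K, hK, hφ⟩ :=
    exists_branchWeight_lt ν (lintegral_natCast_ne_top_of_rpow hδ.le hmomδ) hz1'
  have hratio : (∫⁻ k, k * branchWeight (s ^ K) k ∂ν) / s < 1 :=
    ENNReal.div_lt_of_lt_mul (by rwa [one_mul])
  have hsum : ∑' n, GW (lowBranchingAt K n) ≠ ⊤ :=
    ne_top_of_le_ne_top (tsum_geometric_lt_top.2 hratio).ne
      (ENNReal.tsum_le_tsum fun n => measure_lowBranchingAt_le hGW hs0 hs1 K n)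
  refine ⟨1 / K, by positivity, ?_⟩
  filter_upwards [ae_eventually_notMem hsum] with T hT
  obtain ⟨N, hN⟩ := eventually_atTop.1 hT
  refine ⟨N, fun n hn v hv hlen => not_lt.1 fun hlt => hN n hn ⟨v, hv, hlen, ?_⟩⟩
  rw [one_div, inv_mul_eq_div, lt_div_iff₀ (by positivity)] at hlt
  exact_mod_cast (by linarith : (K : ℝ) * mTcount T v < n)

/-- there is `c > 0` such that for `GW`-a.e. tree `T` there is `N` with
`min{m_T(v) : |v| = n} ≥ c·n` for all `n ≥ N`. -/
theorem branching_ancestors_linear_lower_bound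
    (ν : Measure ℕ) [IsProbabilityMeasure ν]
    (hz0 : ν {0} = 0) (hz1 : 0 < ν {1}) (hz1' : ν {1} < 1)
    (hmom : ∃ δ : ℝ, 0 < δ ∧ ∫⁻ k, (k : ℝ≥0∞) ^ ((1 : ℝ) + δ) ∂ν < ⊤)
    (GW : Measure GWTree) (hGW : IsGW ν GW) :
    ∃ c : ℝ, 0 < c ∧
      ∀ᵐ T ∂GW, ∃ N : ℕ, ∀ n, N ≤ n → ∀ v : List ℕ, T.mem v → v.length = n →
        c * n ≤ (mTcount T v : ℝ) :=
  branching_ancestors_linear_lower_bound_general ν hz1' hmom GW hGW
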